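/- arXiv:1311.7603 — 3 statements merged into one kernel-verified Lean document; each statement's English description precedes it below -/
import Mathlib

section
/- Let G₁, G₂, G₃ ∈ ℂ³ be linearly independent vectors. Then the 3×6 complex matrix whose columns are G₁×e₁, G₁×e₂, G₂×e₁, G₂×e₂, G₃×e₁, G₃×e₂ (where e₁, e₂ are the first two standard basis vectors of ℂ³ and × is the cross product extended bilinearly to ℂ³) has rank three. -/
/-!
Since the `Gₖ` span `ℂ³` and `u ↦ u ⨯₃ w` is linear, the column span contains `u ⨯₃ e₁` and
`u ⨯₃ e₂` for every `u`, and already `e₃ ⨯₃ e₂`, `e₃ ⨯₃ e₁`, `e₁ ⨯₃ e₂` are `-e₁`, `e₂`, `e₃`.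
-/

open Matrix Set Submodule

theorem crossProduct_mem_span_range_crossProduct {R ι : Type*} [CommRing R]
    (G : ι → Fin 3 → R) (w : Fin 3 → R) {v : Fin 3 → R} (hv : v ∈ span R (range G)) :
    v ⨯₃ w ∈ span R (range fun i => G i ⨯₃ w) := by
  have := mem_map_of_mem (f := crossProduct.flip w) hv
  rwa [map_span, ← range_comp] at this

theorem eq_top_of_forall_crossProduct_single_mem {R : Type*} [CommRing R]
    (S : Submodule R (Fin 3 → R)) (h₀ : ∀ u, u ⨯₃ Pi.single 0 1 ∈ S)
    (h₁ : ∀ u, u ⨯₃ Pi.single 1 1 ∈ S) : S = ⊤ := by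
  have hsingle : ∀ j : Fin 3, Pi.single j (1 : R) ∈ S := by
    intro j
    fin_cases j
    · convert h₁ (-Pi.single 2 1) using 1
      ext i; fin_cases i <;> simp [cross_apply]
    · convert h₀ (Pi.single 2 1) using 1
      ext i; fin_cases i <;> simp [cross_apply]
    · convert h₁ (Pi.single 0 1) using 1
      ext i; fin_cases i <;> simp [cross_apply]
  rw [eq_top_iff, ← (Pi.basisFun R (Fin 3)).span_eq, span_le]
  rintro _ ⟨j, rfl⟩
  simpa using hsingle j

theorem stmt0 (G : Fin 3 → Fin 3 → ℂ) (hG : LinearIndependent ℂ G) :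
    (Matrix.of fun (i : Fin 3) (p : Fin 3 × Fin 2) =>
      crossProduct (G p.1) (Pi.single (Fin.castLE (by norm_num) p.2) 1) i).rank = 3 := by
  set A := Matrix.of fun (i : Fin 3) (p : Fin 3 × Fin 2) =>
    crossProduct (G p.1) (Pi.single (Fin.castLE (by norm_num) p.2) 1) i
  have hspan : span ℂ (range G) = ⊤ := hG.span_eq_top_of_card_eq_finrank (by simp)
  have hcols (m : Fin 2) (u : Fin 3 → ℂ) :
      u ⨯₃ Pi.single (Fin.castLE (by norm_num) m) 1 ∈ span ℂ (range A.col) := by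
    refine span_mono ?_ (crossProduct_mem_span_range_crossProduct G _ (hspan ▸ mem_top))
    rintro _ ⟨k, rfl⟩
    exact ⟨(k, m), rfl⟩
  rw [rank_eq_finrank_span_cols, eq_top_of_forall_crossProduct_single_mem _ (hcols 0) (hcols 1)]
  simp
end

section
/- Define η on pairs of C¹ vector fields on ℝ³ by η(u₁,u₂) = (∇u₁)u₂ − (∇u₂)u₁ + (div u₁)u₂ − (div u₂)u₁ − 2ᵗ(∇u₁)u₂ + 2ᵗ(∇u₂)u₁, where ∇u is the Jacobian matrix and ᵗ denotes transpose. For the specific gradient fields u₁ = e₂, u₂ = ∇(x₁x₂) = (x₂, x₁, 0), u₃ = e₃, u₄ = ∇(x₂x₃) = (0, x₃, x₂), u₅ = e₁, u₆ = ∇(x₁x₃) = (x₃, 0, x₁) on ℝ³, one has det [η(u₁,u₂) | η(u₃,u₄) | η(u₅,u₆)](x) = 1 for every x ∈ ℝ³. -/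
noncomputable def jacR (u : (Fin 3 → ℝ) → (Fin 3 → ℝ)) (x : Fin 3 → ℝ) :
    Matrix (Fin 3) (Fin 3) ℝ :=
  Matrix.of fun i j => fderiv ℝ u x (Pi.single j 1) i

noncomputable def divR (u : (Fin 3 → ℝ) → (Fin 3 → ℝ)) (x : Fin 3 → ℝ) : ℝ :=
  (jacR u x).trace

noncomputable def etaR (u v : (Fin 3 → ℝ) → (Fin 3 → ℝ)) (x : Fin 3 → ℝ) : Fin 3 → ℝ :=
  Matrix.mulVec (jacR u x) (v x) - Matrix.mulVec (jacR v x) (u x)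
    + divR u x • v x - divR v x • u x
    - (2 : ℝ) • Matrix.mulVec (Matrix.transpose (jacR u x)) (v x)
    + (2 : ℝ) • Matrix.mulVec (Matrix.transpose (jacR v x)) (u x)

lemma jac_const (c : Fin 3 → ℝ) (x : Fin 3 → ℝ) : jacR (fun _ => c) x = 0 := by
  ext i j
  simp [jacR]

lemma jac_clm (L : (Fin 3 → ℝ) →L[ℝ] (Fin 3 → ℝ)) (x : Fin 3 → ℝ) :
    jacR (fun y => L y) x = Matrix.of fun i j => L (Pi.single j 1) i := by
  ext i j
  simp [jacR, L.fderiv]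

noncomputable def L12 : (Fin 3 → ℝ) →L[ℝ] (Fin 3 → ℝ) :=
  ContinuousLinearMap.pi ![ContinuousLinearMap.proj 1, ContinuousLinearMap.proj 0, 0]

noncomputable def L23 : (Fin 3 → ℝ) →L[ℝ] (Fin 3 → ℝ) :=
  ContinuousLinearMap.pi ![0, ContinuousLinearMap.proj 2, ContinuousLinearMap.proj 1]

noncomputable def L13 : (Fin 3 → ℝ) →L[ℝ] (Fin 3 → ℝ) :=
  ContinuousLinearMap.pi ![ContinuousLinearMap.proj 2, 0, ContinuousLinearMap.proj 0]

lemma jac12 (x : Fin 3 → ℝ) :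
    jacR (fun y => ![y 1, y 0, 0]) x = !![0,1,0;1,0,0;0,0,0] := by
  have h : (fun y : Fin 3 → ℝ => ![y 1, y 0, 0]) = fun y => L12 y := by
    funext y; ext i; fin_cases i <;> simp [L12]
  rw [h, jac_clm]
  ext i j
  fin_cases i <;> fin_cases j <;>
    simp [L12, Pi.single_apply, Matrix.vecHead, Matrix.vecTail]

lemma jac23 (x : Fin 3 → ℝ) :
    jacR (fun y => ![0, y 2, y 1]) x = !![0,0,0;0,0,1;0,1,0] := by
  have h : (fun y : Fin 3 → ℝ => ![0, y 2, y 1]) = fun y => L23 y := by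
    funext y; ext i; fin_cases i <;> simp [L23]
  rw [h, jac_clm]
  ext i j
  fin_cases i <;> fin_cases j <;>
    simp [L23, Pi.single_apply, Matrix.vecHead, Matrix.vecTail]

lemma jac13 (x : Fin 3 → ℝ) :
    jacR (fun y => ![y 2, 0, y 0]) x = !![0,0,1;0,0,0;1,0,0] := by
  have h : (fun y : Fin 3 → ℝ => ![y 2, 0, y 0]) = fun y => L13 y := by
    funext y; ext i; fin_cases i <;> simp [L13]
  rw [h, jac_clm]
  ext i j
  fin_cases i <;> fin_cases j <;>
    simp [L13, Pi.single_apply, Matrix.vecHead, Matrix.vecTail]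

lemma eta1 (x : Fin 3 → ℝ) :
    etaR (fun _ => Pi.single 1 1) (fun y => ![y 1, y 0, 0]) x = ![1,0,0] := by
  have h1 := jac_const (Pi.single 1 (1:ℝ)) x
  have h2 := jac12 x
  funext i
  fin_cases i <;>
    simp [etaR, divR, h1, h2, Matrix.mulVec, dotProduct, Matrix.trace,
      Pi.single_apply, Fin.sum_univ_three, Matrix.transpose, Matrix.vecHead,
      Matrix.vecTail, Function.comp] <;> norm_num

lemma eta2 (x : Fin 3 → ℝ) :
    etaR (fun _ => Pi.single 2 1) (fun y => ![0, y 2, y 1]) x = ![0,1,0] := by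
  have h1 := jac_const (Pi.single 2 (1:ℝ)) x
  have h2 := jac23 x
  funext i
  fin_cases i <;>
    simp [etaR, divR, h1, h2, Matrix.mulVec, dotProduct, Matrix.trace,
      Pi.single_apply, Fin.sum_univ_three, Matrix.transpose, Matrix.vecHead,
      Matrix.vecTail, Function.comp] <;> norm_num

lemma eta3 (x : Fin 3 → ℝ) :
    etaR (fun _ => Pi.single 0 1) (fun y => ![y 2, 0, y 0]) x = ![0,0,1] := by
  have h1 := jac_const (Pi.single 0 (1:ℝ)) x
  have h2 := jac13 x
  funext i
  fin_cases i <;>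
    simp [etaR, divR, h1, h2, Matrix.mulVec, dotProduct, Matrix.trace,
      Pi.single_apply, Fin.sum_univ_three, Matrix.transpose, Matrix.vecHead,
      Matrix.vecTail, Function.comp] <;> norm_num

theorem stmt2 (x : Fin 3 → ℝ) :
    Matrix.det (Matrix.of fun i j =>
      (![etaR (fun _ => Pi.single 1 1) (fun y => ![y 1, y 0, 0]) x,
         etaR (fun _ => Pi.single 2 1) (fun y => ![0, y 2, y 1]) x,
         etaR (fun _ => Pi.single 0 1) (fun y => ![y 2, 0, y 0]) x] j) i) = 1 := by
  rw [Matrix.det_fin_three]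
  simp [eta1, eta2, eta3]
end

section
/- Let D ⊆ ℂ be open and connected, let X be a compact topological space, and for each x ∈ X let g_x : D → ℂ be analytic, such that the map (x, ω) ↦ g_x(ω) is continuous in x for each fixed ω. Suppose g_x(ω₀) ≠ 0 for all x ∈ X for some fixed ω₀ ∈ D, and let (ωₙ) be a sequence in D with ωₙ → ω ∈ D and ωₙ ≠ ω. Then there exists a finite set N ⊆ ℕ such that for every x ∈ X there is n ∈ N with g_x(ωₙ) ≠ 0. -/
/-! By the identity theorem no `g x` can vanish at every `ωn n`: the zeros would accumulate at
`ω ∈ D`, forcing `g x ≡ 0` on `D` against `g x ω₀ ≠ 0`. So the open sets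
`{x | g x (ωn n) ≠ 0}` cover the compact space `X`, and finitely many of them suffice. -/

open Filter Topology

theorem AnalyticOnNhd.eqOn_zero_of_tendsto_of_eq_zero {𝕜 E ι : Type*}
    [NontriviallyNormedField 𝕜] [NormedAddCommGroup E] [NormedSpace 𝕜 E] {f : 𝕜 → E} {U : Set 𝕜}
    (hf : AnalyticOnNhd 𝕜 f U) (hU : IsPreconnected U) {z₀ : 𝕜} (hz₀ : z₀ ∈ U)
    {l : Filter ι} [l.NeBot] {u : ι → 𝕜} (hu : Tendsto u l (𝓝[≠] z₀))
    (hzero : ∀ i, f (u i) = 0) : Set.EqOn f 0 U :=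
  hf.eqOn_zero_of_preconnected_of_frequently_eq_zero hU hz₀
    (hu.frequently (Frequently.of_forall hzero))

theorem exists_finset_forall_exists_ne_zero {X E ι : Type*} [TopologicalSpace X] [CompactSpace X]
    [TopologicalSpace E] [T1Space E] [Zero E] {h : ι → X → E} (hh : ∀ i, Continuous (h i))
    (hcover : ∀ x, ∃ i, h i x ≠ 0) : ∃ N : Finset ι, ∀ x, ∃ i ∈ N, h i x ≠ 0 := by
  obtain ⟨N, hN⟩ := isCompact_univ.elim_finite_subcover (fun i => {x | h i x ≠ 0})
    (fun i => (isClosed_singleton.preimage (hh i)).isOpen_compl)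
    (fun x _ => Set.mem_iUnion.mpr (hcover x))
  exact ⟨N, fun x => by simpa using hN (Set.mem_univ x)⟩

theorem stmt3 {D : Set ℂ} (hD : IsOpen D) (hDconn : IsConnected D)
    {X : Type*} [TopologicalSpace X] [CompactSpace X]
    (g : X → ℂ → ℂ)
    (hg : ∀ x, DifferentiableOn ℂ (g x) D)
    (hcont : ∀ ω ∈ D, Continuous fun x => g x ω)
    (ω₀ : ℂ) (hω₀ : ω₀ ∈ D) (hnz : ∀ x, g x ω₀ ≠ 0)
    (ωn : ℕ → ℂ) (hωn : ∀ n, ωn n ∈ D) (ω : ℂ) (hω : ω ∈ D)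
    (hlim : Filter.Tendsto ωn Filter.atTop (nhds ω)) (hne : ∀ n, ωn n ≠ ω) :
    ∃ N : Finset ℕ, ∀ x : X, ∃ n ∈ N, g x (ωn n) ≠ 0 := by
  have hpunct : Tendsto ωn atTop (𝓝[≠] ω) :=
    tendsto_nhdsWithin_iff.mpr ⟨hlim, Eventually.of_forall hne⟩
  refine exists_finset_forall_exists_ne_zero (fun n => hcont _ (hωn n)) fun x => ?_
  by_contra! hzero
  exact hnz x <| ((hg x).analyticOnNhd hD).eqOn_zero_of_tendsto_of_eq_zero
    hDconn.isPreconnected hω hpunct hzero hω₀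
end
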